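/- arXiv:0806.2229 — 3 statements merged into one kernel-verified Lean document; each statement's English description precedes it below -/
import Mathlib

section
/- Let (X, d) be a metric space, A ⊆ X a nonempty subset, g : X → ℝ, and k a real number with 0 ≤ k < 1 such that |g(y) − g(z)| ≤ k · d(y, z) for all y, z ∈ A. Then for every x ∈ A and every q ∈ A one has d(x, q) + g(q) ≥ g(x), with strict inequality whenever q ≠ x; consequently the Lax–Oleinik function u(x) = ⨅_{q ∈ A} (d(x, q) + g(q)) satisfies u(x) = g(x) for every x ∈ A, the infimum being attained only at q = x. -/
section

variable {X : Type*} {g : X → ℝ} {k : ℝ} {x q : X}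

theorem le_dist_add_of_sub_le_mul_dist [PseudoMetricSpace X] (hk : k ≤ 1)
    (hg : g x - g q ≤ k * dist x q) : g x ≤ dist x q + g q := by
  nlinarith [dist_nonneg (x := x) (y := q)]

theorem lt_dist_add_of_sub_le_mul_dist [MetricSpace X] (hk : k < 1)
    (hg : g x - g q ≤ k * dist x q) (hne : q ≠ x) : g x < dist x q + g q := by
  have hk_dist : k * dist x q < dist x q := mul_lt_of_lt_one_left (dist_pos.2 hne.symm) hk
  linarith

end

theorem lax_oleinik_attains_boundary_data_general
    {X : Type*} [MetricSpace X] (A : Set X)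
    (g : X → ℝ) (k : ℝ) (hk1 : k < 1)
    (hg : ∀ y ∈ A, ∀ z ∈ A, |g y - g z| ≤ k * dist y z) :
    ∀ x ∈ A,
      (∀ q ∈ A, g x ≤ dist x q + g q) ∧
      (∀ q ∈ A, q ≠ x → g x < dist x q + g q) ∧
      (⨅ q : A, (dist x (q : X) + g q)) = g x ∧
      (∀ q ∈ A, dist x q + g q = g x → q = x) := by
  intro x hx
  have hsub : ∀ q ∈ A, g x - g q ≤ k * dist x q :=
    fun q hq => (le_abs_self _).trans (hg x hx q hq)
  have hle : ∀ q ∈ A, g x ≤ dist x q + g q :=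
    fun q hq => le_dist_add_of_sub_le_mul_dist hk1.le (hsub q hq)
  have hlt : ∀ q ∈ A, q ≠ x → g x < dist x q + g q :=
    fun q hq => lt_dist_add_of_sub_le_mul_dist hk1 (hsub q hq)
  refine ⟨hle, hlt, ?_, fun q hq heq => ?_⟩
  · exact IsLeast.csInf_eq ⟨⟨⟨x, hx⟩, by simp⟩, Set.forall_mem_range.2 fun q => hle q q.2⟩
  · by_contra hne
    exact (hlt q hq hne).ne' heq

/-- If `g` satisfies the compatibility condition `|g y - g z| ≤ k * d(y,z)` on `A`
with `0 ≤ k < 1`, then for every `x ∈ A` and `q ∈ A` one has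
`d(x,q) + g q ≥ g x`, strictly whenever `q ≠ x`; hence the Lax–Oleinik function
`u x = ⨅_{q ∈ A} (d(x,q) + g q)` equals `g x` on `A`, the infimum being attained
only at `q = x`. -/
theorem lax_oleinik_attains_boundary_data
    {X : Type*} [MetricSpace X] (A : Set X) (hA : A.Nonempty)
    (g : X → ℝ) (k : ℝ) (hk0 : 0 ≤ k) (hk1 : k < 1)
    (hg : ∀ y ∈ A, ∀ z ∈ A, |g y - g z| ≤ k * dist y z) :
    ∀ x ∈ A,
      (∀ q ∈ A, g x ≤ dist x q + g q) ∧
      (∀ q ∈ A, q ≠ x → g x < dist x q + g q) ∧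
      (⨅ q : A, (dist x (q : X) + g q)) = g x ∧
      (∀ q ∈ A, dist x q + g q = g x → q = x) :=
  lax_oleinik_attains_boundary_data_general A g k hk1 hg
end

section
/- Let U ⊆ ℝⁿ be open and let φ₀, φ₁ : U × ℝⁿ → ℝ be C¹ on U × (ℝⁿ \ {0}) and positively 1-homogeneous in the second variable. Let X : U → ℝⁿ be a C¹ vector field with X(p) ≠ 0 for all p ∈ U, such that: (i) φ₀(p, X(p)) = φ₁(p, X(p)) = 1 for all p ∈ U; and (ii) for every p ∈ U the partial Fréchet derivatives in the second variable D_v φ₀(p, X(p)) and D_v φ₁(p, X(p)) have the same kernel (the tangent hyperplanes to the indicatrices of φ₀ and φ₁ at X(p) coincide). Let α : I → U be a C¹ integral curve of X (α'(t) = X(α(t)) on an open interval I) such that the Euler–Lagrange (geodesic) equation for φ₀ holds along α, namely t ↦ D_v φ₀(α(t), α'(t)) is differentiable with derivative D_x φ₀(α(t), α'(t)) for every t ∈ I. Then the Euler–Lagrange equation for φ₁ also holds along α: t ↦ D_v φ₁(α(t), α'(t)) is differentiable with derivative D_x φ₁(α(t), α'(t)). -/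
/-!
By Euler's relation the vertical derivatives `D_v φᵢ (p, X p)` both take the value `1` at `X p`;
having the same kernel, they coincide. Differentiating `φ₀ (p, X p) = φ₁ (p, X p)` in `p` gives
`D_x φ₀ + D_v φ₀ ∘ DX = D_x φ₁ + D_v φ₁ ∘ DX`, so the horizontal derivatives coincide along `X`
as well, and the two Euler–Lagrange equations along `α` are the same equation.
-/

open Filter Topology ContinuousLinearMap

theorem LinearMap.eq_of_ker_iff_of_apply_eq_one {R M : Type*} [CommRing R] [AddCommGroup M]
    [Module R M] {f g : M →ₗ[R] R} {x : M} (hf : f x = 1) (hg : g x = 1)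
    (hker : ∀ w, f w = 0 ↔ g w = 0) : f = g := by
  ext w
  -- `w - f w • x` lies in the common kernel
  have hfw : f (w - f w • x) = 0 := by simp [hf]
  have hgw : g (w - f w • x) = 0 := (hker _).mp hfw
  rw [map_sub, map_smul, hg, smul_eq_mul, mul_one, sub_eq_zero] at hgw
  exact hgw.symm

theorem HasFDerivAt.apply_self_of_posHomogeneous {E F : Type*} [NormedAddCommGroup E]
    [NormedSpace ℝ E] [NormedAddCommGroup F] [NormedSpace ℝ F] {f : E → F} {f' : E →L[ℝ] F}
    {v : E} (hf : HasFDerivAt f f' v) (hhom : ∀ c : ℝ, 0 < c → f (c • v) = c • f v) :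
    f' v = f v := by
  have hray : HasDerivAt (fun c : ℝ => f (c • v)) (f' v) 1 := by
    rw [← one_smul ℝ v] at hf
    simpa [Function.comp_def] using
      hf.comp_hasDerivAt (1 : ℝ) ((hasDerivAt_id (1 : ℝ)).smul_const v)
  have hlin : (fun c : ℝ => f (c • v)) =ᶠ[𝓝 1] fun c => c • f v :=
    eventually_gt_nhds one_pos |>.mono hhom
  exact (hray.congr_of_eventuallyEq hlin.symm).unique
    (by simpa using (hasDerivAt_id (1 : ℝ)).smul_const (f v))

theorem DifferentiableAt.hasFDerivAt_comp_graph {𝕜 E F G : Type*} [NontriviallyNormedField 𝕜]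
    [NormedAddCommGroup E] [NormedSpace 𝕜 E] [NormedAddCommGroup F] [NormedSpace 𝕜 F]
    [NormedAddCommGroup G] [NormedSpace 𝕜 G] {φ : E × F → G} {X : E → F} {X' : E →L[𝕜] F}
    {p : E} (hφ : DifferentiableAt 𝕜 φ (p, X p)) (hX : HasFDerivAt X X' p) :
    HasFDerivAt (fun q => φ (q, X q))
      (fderiv 𝕜 (fun x => φ (x, X p)) p + (fderiv 𝕜 (fun v => φ (p, v)) (X p)).comp X') p := by
  set L := fderiv 𝕜 φ (p, X p)
  have hx : HasFDerivAt (fun x => φ (x, X p)) (L.comp (inl 𝕜 E F)) p :=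
    hφ.hasFDerivAt.comp p (hasFDerivAt_prodMk_left p (X p))
  have hv : HasFDerivAt (fun v => φ (p, v)) (L.comp (inr 𝕜 E F)) (X p) :=
    hφ.hasFDerivAt.comp (X p) (hasFDerivAt_prodMk_right p (X p))
  rw [hx.fderiv, hv.fderiv]
  refine (hφ.hasFDerivAt.comp p ((hasFDerivAt_id p).prodMk hX)).congr_fderiv ?_
  ext w
  simp [L, ← map_add]

theorem fderiv_partial_fst_eq_of_partial_snd_eq {𝕜 E F G : Type*} [NontriviallyNormedField 𝕜]
    [NormedAddCommGroup E] [NormedSpace 𝕜 E] [NormedAddCommGroup F] [NormedSpace 𝕜 F]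
    [NormedAddCommGroup G] [NormedSpace 𝕜 G] {φ₀ φ₁ : E × F → G} {X : E → F} {p : E}
    (h₀ : DifferentiableAt 𝕜 φ₀ (p, X p)) (h₁ : DifferentiableAt 𝕜 φ₁ (p, X p))
    (hX : DifferentiableAt 𝕜 X p)
    (hgraph : (fun q => φ₀ (q, X q)) =ᶠ[𝓝 p] fun q => φ₁ (q, X q))
    (hsnd : fderiv 𝕜 (fun v => φ₀ (p, v)) (X p) = fderiv 𝕜 (fun v => φ₁ (p, v)) (X p)) :
    fderiv 𝕜 (fun x => φ₀ (x, X p)) p = fderiv 𝕜 (fun x => φ₁ (x, X p)) p := by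
  have hsum := (h₀.hasFDerivAt_comp_graph hX.hasFDerivAt).unique
    ((h₁.hasFDerivAt_comp_graph hX.hasFDerivAt).congr_of_eventuallyEq hgraph)
  rw [hsnd] at hsum
  exact add_right_cancel hsum

theorem integral_curves_geodesic_for_both_metrics_general
    {n : ℕ} (U : Set (Fin n → ℝ)) (hU : IsOpen U)
    (φ₀ φ₁ : (Fin n → ℝ) × (Fin n → ℝ) → ℝ)
    (hφ₀ : ContDiffOn ℝ 1 φ₀ (U ×ˢ {v : Fin n → ℝ | v ≠ 0}))
    (hφ₁ : ContDiffOn ℝ 1 φ₁ (U ×ˢ {v : Fin n → ℝ | v ≠ 0}))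
    (hhom₀ : ∀ p ∈ U, ∀ c : ℝ, 0 < c → ∀ v : Fin n → ℝ, φ₀ (p, c • v) = c * φ₀ (p, v))
    (hhom₁ : ∀ p ∈ U, ∀ c : ℝ, 0 < c → ∀ v : Fin n → ℝ, φ₁ (p, c • v) = c * φ₁ (p, v))
    (X : (Fin n → ℝ) → (Fin n → ℝ))
    (hX : ContDiffOn ℝ 1 X U)
    (hX0 : ∀ p ∈ U, X p ≠ 0)
    (hunit : ∀ p ∈ U, φ₀ (p, X p) = 1 ∧ φ₁ (p, X p) = 1)
    (hker : ∀ p ∈ U, ∀ w : Fin n → ℝ,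
      fderiv ℝ (fun v => φ₀ (p, v)) (X p) w = 0 ↔
      fderiv ℝ (fun v => φ₁ (p, v)) (X p) w = 0)
    (a b : ℝ) (α : ℝ → (Fin n → ℝ))
    (hα : ∀ t ∈ Set.Ioo a b, α t ∈ U)
    (hEL₀ : ∀ t ∈ Set.Ioo a b,
      HasDerivAt (fun s => fderiv ℝ (fun v => φ₀ (α s, v)) (X (α s)))
        (fderiv ℝ (fun x => φ₀ (x, X (α t))) (α t)) t) :
    ∀ t ∈ Set.Ioo a b,
      HasDerivAt (fun s => fderiv ℝ (fun v => φ₁ (α s, v)) (X (α s)))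
        (fderiv ℝ (fun x => φ₁ (x, X (α t))) (α t)) t := by
  have hdiff : ∀ φ : (Fin n → ℝ) × (Fin n → ℝ) → ℝ, ContDiffOn ℝ 1 φ (U ×ˢ {v | v ≠ 0}) →
      ∀ p ∈ U, DifferentiableAt ℝ φ (p, X p) := fun φ hφ p hp =>
    (hφ.differentiableOn one_ne_zero).differentiableAt
      ((hU.prod isOpen_ne).mem_nhds ⟨hp, hX0 p hp⟩)
  have heuler : ∀ φ : (Fin n → ℝ) × (Fin n → ℝ) → ℝ, ContDiffOn ℝ 1 φ (U ×ˢ {v | v ≠ 0}) →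
      (∀ p ∈ U, ∀ c : ℝ, 0 < c → ∀ v, φ (p, c • v) = c * φ (p, v)) →
      ∀ p ∈ U, φ (p, X p) = 1 → fderiv ℝ (fun v => φ (p, v)) (X p) (X p) = 1 := by
    intro φ hφ hhom p hp hφX
    rw [← hφX]
    exact ((hdiff φ hφ p hp).comp (X p) ((differentiableAt_const p).prodMk differentiableAt_id))
      |>.hasFDerivAt.apply_self_of_posHomogeneous fun c hc => hhom p hp c hc (X p)
  have hsnd : ∀ p ∈ U,
      fderiv ℝ (fun v => φ₀ (p, v)) (X p) = fderiv ℝ (fun v => φ₁ (p, v)) (X p) := fun p hp =>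
    coe_injective <| LinearMap.eq_of_ker_iff_of_apply_eq_one
      (heuler φ₀ hφ₀ hhom₀ p hp (hunit p hp).1) (heuler φ₁ hφ₁ hhom₁ p hp (hunit p hp).2)
      (hker p hp)
  have hfst : ∀ p ∈ U,
      fderiv ℝ (fun x => φ₀ (x, X p)) p = fderiv ℝ (fun x => φ₁ (x, X p)) p := fun p hp =>
    fderiv_partial_fst_eq_of_partial_snd_eq (hdiff φ₀ hφ₀ p hp) (hdiff φ₁ hφ₁ p hp)
      ((hX.differentiableOn one_ne_zero).differentiableAt (hU.mem_nhds hp))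
      (eventually_of_mem (hU.mem_nhds hp) fun q hq => (hunit q hq).1.trans (hunit q hq).2.symm)
      (hsnd p hp)
  intro t ht
  rw [← hfst (α t) (hα t ht)]
  refine (hEL₀ t ht).congr_of_eventuallyEq ?_
  filter_upwards [isOpen_Ioo.mem_nhds ht] with s hs
  exact (hsnd (α s) (hα s hs)).symm

/-- Chart form of the lemma "cambia metrica respeta campo": if two Finsler metrics
`φ₀`, `φ₁` give the vector field `X` unit norm, the tangent hyperplanes to their
indicatrices at `X p` coincide (the partial derivatives in the second variable have
the same kernel), and an integral curve `α` of `X` satisfies the Euler–Lagrange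
(geodesic) equation for `φ₀`, then `α` satisfies the Euler–Lagrange equation
for `φ₁` as well. -/
theorem integral_curves_geodesic_for_both_metrics
    {n : ℕ} (U : Set (Fin n → ℝ)) (hU : IsOpen U)
    (φ₀ φ₁ : (Fin n → ℝ) × (Fin n → ℝ) → ℝ)
    (hφ₀ : ContDiffOn ℝ 1 φ₀ (U ×ˢ {v : Fin n → ℝ | v ≠ 0}))
    (hφ₁ : ContDiffOn ℝ 1 φ₁ (U ×ˢ {v : Fin n → ℝ | v ≠ 0}))
    (hhom₀ : ∀ p ∈ U, ∀ c : ℝ, 0 < c → ∀ v : Fin n → ℝ, φ₀ (p, c • v) = c * φ₀ (p, v))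
    (hhom₁ : ∀ p ∈ U, ∀ c : ℝ, 0 < c → ∀ v : Fin n → ℝ, φ₁ (p, c • v) = c * φ₁ (p, v))
    (X : (Fin n → ℝ) → (Fin n → ℝ))
    (hX : ContDiffOn ℝ 1 X U)
    (hX0 : ∀ p ∈ U, X p ≠ 0)
    (hunit : ∀ p ∈ U, φ₀ (p, X p) = 1 ∧ φ₁ (p, X p) = 1)
    (hker : ∀ p ∈ U, ∀ w : Fin n → ℝ,
      fderiv ℝ (fun v => φ₀ (p, v)) (X p) w = 0 ↔
      fderiv ℝ (fun v => φ₁ (p, v)) (X p) w = 0)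
    (a b : ℝ) (α : ℝ → (Fin n → ℝ))
    (hα : ∀ t ∈ Set.Ioo a b, α t ∈ U)
    (hint : ∀ t ∈ Set.Ioo a b, HasDerivAt α (X (α t)) t)
    (hEL₀ : ∀ t ∈ Set.Ioo a b,
      HasDerivAt (fun s => fderiv ℝ (fun v => φ₀ (α s, v)) (X (α s)))
        (fderiv ℝ (fun x => φ₀ (x, X (α t))) (α t)) t) :
    ∀ t ∈ Set.Ioo a b,
      HasDerivAt (fun s => fderiv ℝ (fun v => φ₁ (α s, v)) (X (α s)))
        (fderiv ℝ (fun x => φ₁ (x, X (α t))) (α t)) t :=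
  integral_curves_geodesic_for_both_metrics_general U hU φ₀ φ₁ hφ₀ hφ₁ hhom₀ hhom₁ X hX hX0 hunit
    hker a b α hα hEL₀
end

section
/- Let U ⊆ ℝⁿ be open, φ : U × ℝⁿ → ℝ a function that is C² on U × (ℝⁿ \ {0}) and positively 1-homogeneous in the second variable, and X : U → ℝⁿ a C¹ vector field with X(p) ≠ 0 and φ(p, X(p)) = 1 for all p ∈ U. Define the dual one-form ω : U → (ℝⁿ)* by ω(p) = D_v φ(p, X(p)). Then the following are equivalent: (a) every C¹ integral curve α of X satisfies the Euler–Lagrange (geodesic) equation for φ, i.e. t ↦ D_v φ(α(t), α'(t)) is differentiable with derivative D_x φ(α(t), α'(t)); (b) the Lie derivative of ω in the direction X vanishes, i.e. for every p ∈ U and every w ∈ ℝⁿ, (fderiv ℝ ω p (X p)) w + (ω p) (fderiv ℝ X p w) = 0. -/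
/-!
Differentiating `φ (p, X p) = 1` gives the Euler-type identity
`D_x φ (p, X p) w + ω p (D X p w) = 0`, so the Lie derivative `(L_X ω) p w` equals
`D ω p (X p) w - D_x φ (p, X p) w`. On the other hand, along an integral curve `α` of `X` the
momentum `t ↦ D_v φ (α t, α' t)` is `ω ∘ α`, whose derivative is `D ω (α t) (X (α t))`. Hence the
Euler–Lagrange equation along all integral curves says `D ω p (X p) = D_x φ (p, X p)` at every point
reached by one, and by Picard–Lindelöf every point of `U` is.
-/

open Set Filter Topology

section PartialDerivatives

variable {𝕜 E F G : Type*} [NontriviallyNormedField 𝕜]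
  [NormedAddCommGroup E] [NormedSpace 𝕜 E] [NormedAddCommGroup F] [NormedSpace 𝕜 F]
  [NormedAddCommGroup G] [NormedSpace 𝕜 G] {f : E × F → G}

theorem DifferentiableAt.fderiv_comp_prodMk_left {x : E} {y : F}
    (hf : DifferentiableAt 𝕜 f (x, y)) :
    fderiv 𝕜 (fun u => f (u, y)) x = (fderiv 𝕜 f (x, y)).comp (ContinuousLinearMap.inl 𝕜 E F) :=
  (hf.hasFDerivAt.comp x (hasFDerivAt_prodMk_left x y)).fderiv

theorem DifferentiableAt.fderiv_comp_prodMk_right {x : E} {y : F}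
    (hf : DifferentiableAt 𝕜 f (x, y)) :
    fderiv 𝕜 (fun v => f (x, v)) y = (fderiv 𝕜 f (x, y)).comp (ContinuousLinearMap.inr 𝕜 E F) :=
  (hf.hasFDerivAt.comp y (hasFDerivAt_prodMk_right x y)).fderiv

variable {X : E → F} {p : E}

theorem fderiv_comp_graph_apply (hf : DifferentiableAt 𝕜 f (p, X p))
    (hX : DifferentiableAt 𝕜 X p) (w : E) :
    fderiv 𝕜 (fun q => f (q, X q)) p w =
      fderiv 𝕜 (fun u => f (u, X p)) p w + fderiv 𝕜 (fun v => f (p, v)) (X p) (fderiv 𝕜 X p w) := by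
  have hgraph : HasFDerivAt (fun q => f (q, X q))
      ((fderiv 𝕜 f (p, X p)).comp ((ContinuousLinearMap.id 𝕜 E).prod (fderiv 𝕜 X p))) p :=
    hf.hasFDerivAt.comp p ((hasFDerivAt_id p).prodMk hX.hasFDerivAt)
  rw [hgraph.fderiv, hf.fderiv_comp_prodMk_left, hf.fderiv_comp_prodMk_right]
  simp [← map_add]

theorem fderiv_comp_prodMk_left_add_fderiv_comp_prodMk_right_eq_zero
    (hf : DifferentiableAt 𝕜 f (p, X p)) (hX : DifferentiableAt 𝕜 X p) {c : G}
    (hc : (fun q => f (q, X q)) =ᶠ[𝓝 p] fun _ => c) (w : E) :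
    fderiv 𝕜 (fun u => f (u, X p)) p w + fderiv 𝕜 (fun v => f (p, v)) (X p) (fderiv 𝕜 X p w) = 0 := by
  rw [← fderiv_comp_graph_apply hf hX, hc.fderiv_eq, fderiv_const_apply, zero_apply]

theorem differentiableAt_fderiv_comp_prodMk_right (hf : ContDiffAt 𝕜 2 f (p, X p))
    (hX : DifferentiableAt 𝕜 X p) :
    DifferentiableAt 𝕜 (fun q => fderiv 𝕜 (fun v => f (q, v)) (X q)) p := by
  have hgraph : ContinuousAt (fun q => (q, X q)) p := continuousAt_id.prodMk hX.continuousAt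
  have hdiff : ∀ᶠ q in 𝓝 p, DifferentiableAt 𝕜 f (q, X q) :=
    hgraph.eventually ((hf.eventually (by simp)).mono fun z hz => hz.differentiableAt (by simp))
  have hfderiv : DifferentiableAt 𝕜 (fderiv 𝕜 f) (p, X p) :=
    (hf.fderiv_right (m := 1) (by norm_num)).differentiableAt (by simp)
  exact ((hfderiv.comp p (differentiableAt_id.prodMk hX)).clm_comp
    (differentiableAt_const (ContinuousLinearMap.inr 𝕜 E F))).congr_of_eventuallyEq
    (hdiff.mono fun q hq => hq.fderiv_comp_prodMk_right)

end PartialDerivatives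

section IntegralCurves

variable {E F : Type*} [NormedAddCommGroup E] [NormedSpace ℝ E] [CompleteSpace E]
  [NormedAddCommGroup F] [NormedSpace ℝ F] {X : E → E} {U : Set E}

theorem ContDiffAt.exists_integralCurve_mem {p : E} (hX : ContDiffAt ℝ 1 X p) (hU : U ∈ 𝓝 p) :
    ∃ α : ℝ → E, α 0 = p ∧ ∃ ε > 0, ∀ t ∈ Ioo (-ε) ε, α t ∈ U ∧ HasDerivAt α (X (α t)) t := by
  obtain ⟨α, hα0, ε, hε, hα⟩ := hX.exists_forall_mem_closedBall_exists_eq_forall_mem_Ioo_hasDerivAt₀ 0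
  have hderiv : ∀ᶠ t in 𝓝 0, HasDerivAt α (X (α t)) t :=
    eventually_of_mem (Ioo_mem_nhds (by linarith) (by linarith)) hα
  have hmem : ∀ᶠ t in 𝓝 0, α t ∈ U :=
    hderiv.self_of_nhds.continuousAt.preimage_mem_nhds (hα0 ▸ hU)
  obtain ⟨δ, hδ, h⟩ := Metric.eventually_nhds_iff_ball.mp (hmem.and hderiv)
  refine ⟨α, hα0, δ, hδ, fun t ht => h t ?_⟩
  rwa [Real.ball_eq_Ioo, zero_sub, zero_add]

theorem forall_hasDerivAt_comp_integralCurve_iff (hU : IsOpen U) (hX : ContDiffOn ℝ 1 X U)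
    {g : E → F} (hg : ∀ p ∈ U, DifferentiableAt ℝ g p) {G : E → F} :
    (∀ (a b : ℝ) (α : ℝ → E), (∀ t ∈ Ioo a b, α t ∈ U) →
        (∀ t ∈ Ioo a b, HasDerivAt α (X (α t)) t) →
        ∀ t ∈ Ioo a b, HasDerivAt (fun s => g (α s)) (G (α t)) t) ↔
      ∀ p ∈ U, fderiv ℝ g p (X p) = G p := by
  have along (α : ℝ → E) (t : ℝ) (hαU : α t ∈ U) (hα : HasDerivAt α (X (α t)) t) :
      HasDerivAt (fun s => g (α s)) (fderiv ℝ g (α t) (X (α t))) t :=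
    (hg _ hαU).hasFDerivAt.comp_hasDerivAt t hα
  constructor
  · intro H p hp
    obtain ⟨α, rfl, ε, hε, hα⟩ :=
      (hX.contDiffAt (hU.mem_nhds hp)).exists_integralCurve_mem (hU.mem_nhds hp)
    have h0 : (0 : ℝ) ∈ Ioo (-ε) ε := ⟨neg_lt_zero.2 hε, hε⟩
    exact (along α 0 (hα 0 h0).1 (hα 0 h0).2).unique
      (H _ _ α (fun t ht => (hα t ht).1) (fun t ht => (hα t ht).2) 0 h0)
  · rintro H a b α hαU hα t ht
    rw [← H _ (hαU t ht)]
    exact along α t (hαU t ht) (hα t ht)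

end IntegralCurves

theorem integral_curves_geodesics_iff_lie_derivative_of_dual_form_vanishes_general
    {n : ℕ} (U : Set (Fin n → ℝ)) (hU : IsOpen U)
    (φ : (Fin n → ℝ) × (Fin n → ℝ) → ℝ)
    (hφ : ContDiffOn ℝ 2 φ (U ×ˢ {v : Fin n → ℝ | v ≠ 0}))
    (X : (Fin n → ℝ) → (Fin n → ℝ))
    (hX : ContDiffOn ℝ 1 X U)
    (hX0 : ∀ p ∈ U, X p ≠ 0)
    (hunit : ∀ p ∈ U, φ (p, X p) = 1)
    (ω : (Fin n → ℝ) → ((Fin n → ℝ) →L[ℝ] ℝ))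
    (hω : ∀ p : Fin n → ℝ, ω p = fderiv ℝ (fun v => φ (p, v)) (X p)) :
    (∀ (a b : ℝ) (α : ℝ → (Fin n → ℝ)),
        (∀ t ∈ Set.Ioo a b, α t ∈ U) →
        (∀ t ∈ Set.Ioo a b, HasDerivAt α (X (α t)) t) →
        ∀ t ∈ Set.Ioo a b,
          HasDerivAt (fun s => fderiv ℝ (fun v => φ (α s, v)) (X (α s)))
            (fderiv ℝ (fun x => φ (x, X (α t))) (α t)) t)
    ↔
    (∀ p ∈ U, ∀ w : Fin n → ℝ,
        (fderiv ℝ ω p (X p)) w + (ω p) (fderiv ℝ X p w) = 0) := by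
  have hφ' (p) (hp : p ∈ U) : ContDiffAt ℝ 2 φ (p, X p) :=
    hφ.contDiffAt ((hU.prod isOpen_ne).mem_nhds ⟨hp, hX0 p hp⟩)
  have hX' (p) (hp : p ∈ U) : DifferentiableAt ℝ X p :=
    (hX.contDiffAt (hU.mem_nhds hp)).differentiableAt one_ne_zero
  have hωd (p) (hp : p ∈ U) : DifferentiableAt ℝ ω p :=
    funext hω ▸ differentiableAt_fderiv_comp_prodMk_right (hφ' p hp) (hX' p hp)
  have euler (p) (hp : p ∈ U) (w) :
      fderiv ℝ (fun x => φ (x, X p)) p w + ω p (fderiv ℝ X p w) = 0 :=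
    hω p ▸ fderiv_comp_prodMk_left_add_fderiv_comp_prodMk_right_eq_zero
      ((hφ' p hp).differentiableAt two_ne_zero) (hX' p hp) (eventually_of_mem (hU.mem_nhds hp) hunit) w
  simp only [← hω]
  refine (forall_hasDerivAt_comp_integralCurve_iff hU hX hωd
    (G := fun p => fderiv ℝ (fun x => φ (x, X p)) p)).trans <|
    forall₂_congr fun p hp => ContinuousLinearMap.ext_iff.trans (forall_congr' fun w => ?_)
  rw [← euler p hp w, add_left_inj]

/-- Chart form of the lemma "characterization of Finsler geodesics": for a
non-vanishing unit vector field `X` of a Finsler metric `φ` with dual one-form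
`ω p = D_v φ (p, X p)`, all integral curves of `X` satisfy the Euler–Lagrange
(geodesic) equation for `φ` if and only if the Lie derivative of `ω` in the
direction `X` vanishes. -/
theorem integral_curves_geodesics_iff_lie_derivative_of_dual_form_vanishes
    {n : ℕ} (U : Set (Fin n → ℝ)) (hU : IsOpen U)
    (φ : (Fin n → ℝ) × (Fin n → ℝ) → ℝ)
    (hφ : ContDiffOn ℝ 2 φ (U ×ˢ {v : Fin n → ℝ | v ≠ 0}))
    (hhom : ∀ p ∈ U, ∀ c : ℝ, 0 < c → ∀ v : Fin n → ℝ, φ (p, c • v) = c * φ (p, v))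
    (X : (Fin n → ℝ) → (Fin n → ℝ))
    (hX : ContDiffOn ℝ 1 X U)
    (hX0 : ∀ p ∈ U, X p ≠ 0)
    (hunit : ∀ p ∈ U, φ (p, X p) = 1)
    (ω : (Fin n → ℝ) → ((Fin n → ℝ) →L[ℝ] ℝ))
    (hω : ∀ p : Fin n → ℝ, ω p = fderiv ℝ (fun v => φ (p, v)) (X p)) :
    (∀ (a b : ℝ) (α : ℝ → (Fin n → ℝ)),
        (∀ t ∈ Set.Ioo a b, α t ∈ U) →
        (∀ t ∈ Set.Ioo a b, HasDerivAt α (X (α t)) t) →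
        ∀ t ∈ Set.Ioo a b,
          HasDerivAt (fun s => fderiv ℝ (fun v => φ (α s, v)) (X (α s)))
            (fderiv ℝ (fun x => φ (x, X (α t))) (α t)) t)
    ↔
    (∀ p ∈ U, ∀ w : Fin n → ℝ,
        (fderiv ℝ ω p (X p)) w + (ω p) (fderiv ℝ X p w) = 0) :=
  integral_curves_geodesics_iff_lie_derivative_of_dual_form_vanishes_general U hU φ hφ X hX hX0
    hunit ω hω
end
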